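/- Let λ be a partition all of whose rows have even length (e.g. λ = κ^□ for a partition κ) and let D be any domino tableau of shape λ. Then for every r ≥ 1, the number of vertical dominoes of D occupying rows r and r+1 is even; consequently the total number V(D) of vertical dominoes of D is even, so spin(D) = V(D)/2 is an integer. -/

import Mathlib

open scoped Classical

noncomputable section

/-! ### Tableaux -/

/-- A filling of a finite set of cells `(row, column)` (0-indexed, rows increase downwards);
the entry is `0` outside the cells. -/
structure Tab where
  cells : Finset (ℕ × ℕ)
  entry : ℕ × ℕ → ℕ

instance : Nonempty Tab := ⟨⟨∅, fun _ => 0⟩⟩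

namespace Tab

/-- number of cells -/
def size (T : Tab) : ℕ := T.cells.card

/-- column-strict (semistandard) filling: entries vanish off the cells, are positive on the
cells, weakly increase along rows and strictly increase down columns. -/
def IsColStrict (T : Tab) : Prop :=
  (∀ c, c ∉ T.cells → T.entry c = 0) ∧
  (∀ c ∈ T.cells, 0 < T.entry c) ∧
  (∀ i j j', (i, j) ∈ T.cells → (i, j') ∈ T.cells → j ≤ j' →
    T.entry (i, j) ≤ T.entry (i, j')) ∧
  (∀ i i' j, (i, j) ∈ T.cells → (i', j) ∈ T.cells → i < i' →
    T.entry (i, j) < T.entry (i', j))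

/-- standard tableau: column-strict, and the entries are a bijection onto `{1, …, n}`. -/
def IsStd (T : Tab) : Prop :=
  T.IsColStrict ∧ Set.BijOn T.entry ↑T.cells (Set.Icc 1 T.size)

/-- the descent set: `d` such that `d+1` lies in a strictly lower row than `d`. -/
def des (T : Tab) : Finset ℕ :=
  (Finset.Ioo 0 T.size).filter
    (fun d => ∃ c ∈ T.cells, ∃ c' ∈ T.cells,
      T.entry c = d ∧ T.entry c' = d + 1 ∧ c.1 < c'.1)

/-- the major index -/
def maj (T : Tab) : ℕ := ∑ d ∈ T.des, d

/-- the restriction of `T` to the entries in `[a,b]`, standardized (relabelled to start at `1`):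
this is `st(T_{[a,b]})`. -/
def block (T : Tab) (a b : ℕ) : Tab where
  cells := T.cells.filter (fun c => T.entry c ∈ Finset.Icc a b)
  entry := fun c =>
    if c ∈ T.cells ∧ T.entry c ∈ Finset.Icc a b then T.entry c - (a - 1) else 0

/-- a bound on the coordinates of the cells -/
def bound (T : Tab) : ℕ := (T.cells.sup (fun c => max c.1 c.2)) + 1

/-- the entries in row `i`, read from left to right -/
def rowWord (T : Tab) (i : ℕ) : List ℕ :=
  (List.range T.bound).filterMap
    (fun j => if (i, j) ∈ T.cells then some (T.entry (i, j)) else none)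

/-- the reading word: rows read left to right, starting with the bottom row, going up -/
def readingWord (T : Tab) : List ℕ :=
  ((List.range T.bound).reverse).flatMap T.rowWord

end Tab

/-- the total order on tableaux: first by size, then lexicographically by reading word -/
def tabLT (S T : Tab) : Prop :=
  S.size < T.size ∨ (S.size = T.size ∧ S.readingWord < T.readingWord)

/-- straight (partition) shapes -/
def StraightShape (s : Finset (ℕ × ℕ)) : Prop :=
  ∀ i j i' j', (i, j) ∈ s → i' ≤ i → j' ≤ j → (i', j') ∈ s

/-- One jeu de taquin slide: a cell `c` outside the shape is interchanged with an adjacent cell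
`c'` (directly below or directly to the right) inside the shape, carrying its entry, so that the
result is again column-strict. -/
def JdtStep (T T' : Tab) : Prop :=
  T.IsColStrict ∧ T'.IsColStrict ∧
  ∃ c c', c ∉ T.cells ∧ c' ∈ T.cells ∧
    (c' = (c.1 + 1, c.2) ∨ c' = (c.1, c.2 + 1)) ∧
    T'.cells = insert c (T.cells.erase c') ∧
    T'.entry = fun x => if x = c then T.entry c' else if x = c' then 0 else T.entry x

/-- jeu de taquin rectification: the straight-shape tableau obtained by applying slides -/
def rect (T : Tab) : Tab :=
  Classical.epsilon (fun R => Relation.ReflTransGen JdtStep T R ∧ StraightShape R.cells)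

/-! ### Partitions, diagrams, standard Young tableaux -/

/-- the parts of a partition as a weakly decreasing list -/
def partsList {n : ℕ} (p : Nat.Partition n) : List ℕ := (p.parts.sort (· ≤ ·)).reverse

/-- the Young diagram of a partition, as a finite set of (0-indexed) cells -/
def diagram {n : ℕ} (p : Nat.Partition n) : Finset (ℕ × ℕ) :=
  (Finset.range n ×ˢ Finset.range n).filter (fun c => c.2 < (partsList p).getD c.1 0)

/-- the set of standard Young tableaux of shape `μ` -/
def SYT {n : ℕ} (μ : Nat.Partition n) : Set Tab := {T | T.cells = diagram μ ∧ T.IsStd}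

/-- `Des_{λ,i}(T)` for the block decomposition given by the list `L` of parts (0-indexed `i`). -/
def desB (L : List ℕ) (i : ℕ) (T : Tab) : Finset ℕ :=
  (T.des.filter (fun d => (L.take i).sum + 1 ≤ d ∧ d + 1 ≤ (L.take (i + 1)).sum)).image
    (fun d => d - (L.take i).sum)

/-- the `i`-th block-major index (0-indexed `i`) -/
def majB (L : List ℕ) (i : ℕ) (T : Tab) : ℕ := ∑ d ∈ desB L i T, d

/-- `SYT_λ(μ)`: standard Young tableaux of shape `μ` all of whose block-major indices with
respect to `λ` are `≡ 1` modulo the corresponding part. -/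
def SYTmod {n : ℕ} (l μ : Nat.Partition n) : Set Tab :=
  {T | T ∈ SYT μ ∧ ∀ i < (partsList l).length,
    majB (partsList l) i T ≡ 1 [MOD (partsList l).getD i 0]}

/-! ### Symmetric functions -/

/-- the ring of symmetric functions is realized inside power series in variables `x_0, x_1, …` -/
abbrev SymFn := MvPowerSeries ℕ ℚ

/-- the Schur function `s_μ = Σ_T x^T`, the sum over all semistandard Young tableaux of shape
`μ`; the variable `x_i` records the number of entries equal to `i+1`. -/
def schur {n : ℕ} (μ : Nat.Partition n) : SymFn :=
  fun m => (Nat.card {T : Tab // T.cells = diagram μ ∧ T.IsColStrict ∧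
    ∀ i, (T.cells.filter (fun c => T.entry c = i + 1)).card = m i} : ℚ)

/-- the power-sum symmetric function `p_r = Σ_i x_i^r` -/
def powerSum (r : ℕ) : SymFn :=
  fun m => if ∃ i, m = Finsupp.single i r then 1 else 0

/-- the character of the degree-`k` component of the free Lie algebra (Klyachko):
`ch(L_k) = (1/k) Σ_{d ∣ k} μ(d) p_d^{k/d}`. -/
def chL (k : ℕ) : SymFn :=
  (1 / (k : ℚ)) • ∑ d ∈ k.divisors, ((ArithmeticFunction.moebius d : ℤ) : ℚ) • powerSum d ^ (k / d)

/-- plethysm with a power sum: `p_r[f] = f(x_1^r, x_2^r, …)`. -/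
def plethP (r : ℕ) (f : SymFn) : SymFn :=
  fun m => if ∀ i, r ∣ m i then
    MvPowerSeries.coeff (Finsupp.mapRange (· / r) (Nat.zero_div r) m) f else 0

/-- `z_ν = ∏ i^{m_i} m_i!` -/
def zPart {k : ℕ} (ν : Nat.Partition k) : ℚ :=
  (ν.parts.prod : ℚ) * ∏ i ∈ ν.parts.toFinset, (Nat.factorial (ν.parts.count i) : ℚ)

/-- plethysm with a complete homogeneous symmetric function:
`h_k[f] = Σ_{ν ⊢ k} z_ν⁻¹ ∏_i p_{ν_i}[f]`. -/
def plethH (k : ℕ) (f : SymFn) : SymFn :=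
  ∑ ν : Nat.Partition k, (zPart ν)⁻¹ • (ν.parts.map (fun r => plethP r f)).prod

/-- the character of the higher Lie module `L_λ`:
`ch(L_λ) = ∏_i h_{m_i(λ)}[ch(L_i)]`. -/
def chLpart {n : ℕ} (l : Nat.Partition n) : SymFn :=
  ∏ i ∈ Finset.Icc 1 n, plethH (l.parts.count i) (chL i)

/-- `a_λ`, the number of standard Young tableaux of shape `λ ⊢ n` with `maj ≡ 1 (mod n)` -/
def aCoeff {n : ℕ} (l : Nat.Partition n) : ℕ :=
  Nat.card {T : Tab | T ∈ SYT l ∧ T.maj ≡ 1 [MOD n]}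

/-! ### Domino tableaux -/

/-- A labelled domino, recorded by its top-left cell, its orientation
(`true` = vertical), and its label. -/
structure DTab where
  doms : Finset ((ℕ × ℕ) × Bool × ℕ)

namespace DTab

/-- the two cells occupied by a domino -/
def cellsOf (d : (ℕ × ℕ) × Bool × ℕ) : Finset (ℕ × ℕ) :=
  {d.1, if d.2.1 then (d.1.1 + 1, d.1.2) else (d.1.1, d.1.2 + 1)}

/-- the cells covered by all the dominoes -/
def cells (D : DTab) : Finset (ℕ × ℕ) := D.doms.biUnion cellsOf

/-- the label occupying a cell -/
def labelAt (D : DTab) (c : ℕ × ℕ) : ℕ :=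
  (D.doms.filter (fun d => c ∈ cellsOf d)).sup (fun d => d.2.2)

/-- two cells belong to the same domino -/
def SameDom (D : DTab) (c c' : ℕ × ℕ) : Prop :=
  ∃ d ∈ D.doms, c ∈ cellsOf d ∧ c' ∈ cellsOf d

/-- the number of vertical dominoes -/
def Vcount (D : DTab) : ℕ := (D.doms.filter (fun d => d.2.1 = true)).card

/-- the number of horizontal dominoes -/
def Hcount (D : DTab) : ℕ := (D.doms.filter (fun d => d.2.1 = false)).card

/-- the spin: half the number of vertical dominoes -/
def spin (D : DTab) : ℕ := D.Vcount / 2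

/-- `D` is a (semistandard) domino tableau of shape `s`: positive labels, the dominoes tile `s`,
labels weakly increase along rows and strictly increase down columns (comparing cells of
distinct dominoes). -/
def IsTableau (D : DTab) (s : Finset (ℕ × ℕ)) : Prop :=
  (∀ d ∈ D.doms, 0 < d.2.2) ∧
  (∀ d ∈ D.doms, ∀ d' ∈ D.doms, d ≠ d' → Disjoint (cellsOf d) (cellsOf d')) ∧
  D.cells = s ∧
  (∀ i j j', (i, j) ∈ D.cells → (i, j') ∈ D.cells → j ≤ j' →
    D.labelAt (i, j) ≤ D.labelAt (i, j')) ∧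
  (∀ i i' j, (i, j) ∈ D.cells → (i', j) ∈ D.cells → i < i' →
    ¬ D.SameDom (i, j) (i', j) → D.labelAt (i, j) < D.labelAt (i', j))

/-- a bound on the coordinates of the dominoes -/
def bound (D : DTab) : ℕ := (D.doms.sup (fun d => max d.1.1 d.1.2)) + 2

/-- the column reading word: labels read column by column, bottom to top, left to right,
each domino read once, at its top-left cell (for horizontal dominoes, its leftmost cell). -/
def colWord (D : DTab) : List ℕ :=
  (List.range D.bound).flatMap (fun j =>
    ((List.range D.bound).reverse).flatMap (fun i =>
      ((D.doms.filter (fun d => d.1 = (i, j))).toList).map (fun d => d.2.2)))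

end DTab

/-- Yamanouchi word: every suffix contains at least as many `i`'s as `(i+1)`'s, for `i ≥ 1`. -/
def IsYamWord (w : List ℕ) : Prop :=
  ∀ s : List ℕ, s <:+ w → ∀ i : ℕ, s.count (i + 2) ≤ s.count (i + 1)

/-- the diagram of `λ^□ = (2λ_1, 2λ_1, 2λ_2, 2λ_2, …)` -/
def sqDiagram {n : ℕ} (l : Nat.Partition n) : Finset (ℕ × ℕ) :=
  (Finset.range (2 * n) ×ˢ Finset.range (2 * n)).filter
    (fun c => c.2 < 2 * (partsList l).getD (c.1 / 2) 0)

/-- the weight of a domino tableau is the partition `μ`: there are `μ_i` dominoes labelled `i` -/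
def weightEq {m : ℕ} (D : DTab) (μ : Nat.Partition m) : Prop :=
  ∀ i : ℕ, (D.doms.filter (fun d => d.2.2 = i + 1)).card = (partsList μ).getD i 0

/-- Yamanouchi domino tableaux of shape `λ^□` and weight `μ` -/
def YDT {n : ℕ} (l : Nat.Partition n) (μ : Nat.Partition (2 * n)) : Set DTab :=
  {D | D.IsTableau (sqDiagram l) ∧ IsYamWord D.colWord ∧ weightEq D μ}

/-! ### The bijection ξ and the spin statistic on tableaux -/

/-- `SYT^=(2n)`: standard Young tableaux of straight shape with `2n` cells such that
`T_{[n]} = T^{[n+1,2n]}`. -/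
def SYTeqAll (n : ℕ) : Set Tab :=
  {T | T.IsStd ∧ StraightShape T.cells ∧ T.size = 2 * n ∧
    T.block 1 n = rect (T.block (n + 1) (2 * n))}

/-- the codomain `⊔_{λ ⊢ n, μ ⊢ 2n} SYT(λ) × YDT(λ^□, μ)` of the bijection ξ -/
def XiCod (n : ℕ) :=
  Σ l : Nat.Partition n, Σ μ : Nat.Partition (2 * n),
    {U : Tab // U ∈ SYT l} × {D : DTab // D ∈ YDT l μ}

/-- `ξ` is a bijection as in the key lemma: if `ξ T = (U, D)` then `U = T_{[n]}` and the
weight of `D` equals the shape of `T`. -/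
def IsXi (n : ℕ) (ξ : ↥(SYTeqAll n) → XiCod n) : Prop :=
  Function.Bijective ξ ∧
  ∀ T : ↥(SYTeqAll n),
    ((ξ T).2.2.1 : Tab) = (T : Tab).block 1 n ∧ diagram (ξ T).2.1 = (T : Tab).cells

/-- the spin of `T ∈ SYT^=(2n)`, computed through a bijection `ξ` -/
def spinXi {n : ℕ} (ξ : ↥(SYTeqAll n) → XiCod n) (T : ↥(SYTeqAll n)) : ℕ :=
  DTab.spin ((ξ T).2.2.2 : DTab)

/-! ### The two-row subsets -/

/-- `SYT^<_{(n,n)}(μ)`, for `p` the partition `(n,n)` -/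
def SYTlt (n : ℕ) (p μ : Nat.Partition (2 * n)) : Set Tab :=
  {T | T ∈ SYTmod p μ ∧ tabLT (T.block 1 n) (rect (T.block (n + 1) (2 * n)))}

/-- `SYT^{spin}_{(n,n)}(μ)`, for `p` the partition `(n,n)`, with spin computed through `ξ` -/
def SYTspin (n : ℕ) (p μ : Nat.Partition (2 * n)) (ξ : ↥(SYTeqAll n) → XiCod n) : Set Tab :=
  {T | T ∈ SYTmod p μ ∧ ∃ h : T ∈ SYTeqAll n, spinXi ξ ⟨T, h⟩ ≡ n [MOD 2]}

/-- `SYT^{≠}_{(n,n)}(μ)` -/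
def SYTne (n : ℕ) (p μ : Nat.Partition (2 * n)) : Set Tab :=
  {T | T ∈ SYTmod p μ ∧ T.block 1 n ≠ rect (T.block (n + 1) (2 * n))}

/-- `SYT^{=}_{(n,n)}(μ)` -/
def SYTeqSet (n : ℕ) (p μ : Nat.Partition (2 * n)) : Set Tab :=
  {T | T ∈ SYTmod p μ ∧ T.block 1 n = rect (T.block (n + 1) (2 * n))}

/-! ### maxDes -/

/-- the number of cells of `ν` in the first `j` columns, i.e. `ν′_1 + ⋯ + ν′_j` -/
def colPrefix {n : ℕ} (ν : Nat.Partition n) (j : ℕ) : ℕ := (ν.parts.map (fun p => min p j)).sum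

/-- `maxDes(ν) = [n−1] ∖ {ν′_1 + ⋯ + ν′_j : j ∈ [ν_1 − 1]}` for `ν ⊢ n` -/
def maxDes {n : ℕ} (ν : Nat.Partition n) : Finset ℕ :=
  Finset.Icc 1 (n - 1) \ (Finset.Icc 1 ((partsList ν).getD 0 0 - 1)).image (colPrefix ν)

end

/-! Row `r` of the shape meets every vertical domino with top cell in row `r` or `r - 1` once
and every horizontal domino in row `r` twice, so its length is `≡ v r + v (r - 1) (mod 2)`,
where `v r` counts the vertical dominoes with top cell in row `r`. As all rows have even length
and there is no row `-1`, induction on `r` makes every `v r` even, and `V(D) = ∑ v r`. -/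

open Finset

lemma partsList_getD_le {n : ℕ} (p : Nat.Partition n) (r : ℕ) : (partsList p).getD r 0 ≤ n := by
  rcases lt_or_ge r (partsList p).length with hr | hr
  · rw [List.getD_eq_getElem _ _ hr]
    have hmem : ∀ x ∈ partsList p, x ∈ p.parts := fun x hx => by simpa [partsList] using hx
    exact Nat.Partition.le_of_mem_parts (hmem _ (List.getElem_mem hr))
  · rw [List.getD_eq_default _ _ hr]
    exact Nat.zero_le n

lemma length_partsList_le {n : ℕ} (p : Nat.Partition n) : (partsList p).length ≤ n := by
  have hcard : Multiset.card p.parts ≤ p.parts.sum := by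
    simpa using Multiset.card_nsmul_le_sum (a := 1) fun _ hx => p.parts_pos hx
  simpa [partsList, p.parts_sum] using hcard

lemma card_filter_diagram_row {n : ℕ} (p : Nat.Partition n) (r : ℕ) :
    #{c ∈ diagram p | c.1 = r} = (partsList p).getD r 0 := by
  have hrow : {c ∈ diagram p | c.1 = r} = (range ((partsList p).getD r 0)).image (r, ·) := by
    ext ⟨i, j⟩
    simp only [diagram, mem_filter, mem_product, mem_range, mem_image, Prod.mk.injEq]
    constructor
    · rintro ⟨⟨-, hj⟩, rfl⟩
      exact ⟨j, hj, rfl, rfl⟩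
    · rintro ⟨j, hj, rfl, rfl⟩
      have hr : r < (partsList p).length := by
        by_contra! hr
        rw [List.getD_eq_default _ _ hr] at hj
        exact Nat.not_lt_zero j hj
      exact ⟨⟨⟨hr.trans_le (length_partsList_le p), hj.trans_le (partsList_getD_le p r)⟩, hj⟩,
        rfl⟩
  rw [hrow, card_image_of_injective _ (Prod.mk_right_injective r), card_range]

namespace DTab

/-- The vertical dominoes occupying rows `r` and `r + 1`. -/
def verticalsAt (D : DTab) (r : ℕ) : Finset ((ℕ × ℕ) × Bool × ℕ) :=
  {d ∈ D.doms | d.2.1 = true ∧ d.1.1 = r}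

def horizontalsAt (D : DTab) (r : ℕ) : Finset ((ℕ × ℕ) × Bool × ℕ) :=
  {d ∈ D.doms | d.2.1 = false ∧ d.1.1 = r}

lemma card_filter_cellsOf_row (d : (ℕ × ℕ) × Bool × ℕ) (r : ℕ) :
    #{c ∈ cellsOf d | c.1 = r}
      = (if d.2.1 = true ∧ d.1.1 = r then 1 else 0)
        + (if d.2.1 = true ∧ d.1.1 + 1 = r then 1 else 0)
        + 2 * (if d.2.1 = false ∧ d.1.1 = r then 1 else 0) := by
  obtain ⟨⟨a, b⟩, _ | _, l⟩ := d <;>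
  · simp only [cellsOf, filter_insert, filter_singleton]
    split_ifs <;> simp_all

lemma card_filter_cells_row (D : DTab)
    (hdisj : ∀ d ∈ D.doms, ∀ d' ∈ D.doms, d ≠ d' → Disjoint (cellsOf d) (cellsOf d')) (r : ℕ) :
    #{c ∈ D.cells | c.1 = r}
      = #(D.verticalsAt r) + #{d ∈ D.doms | d.2.1 = true ∧ d.1.1 + 1 = r}
        + 2 * #(D.horizontalsAt r) := by
  rw [cells, filter_biUnion, card_biUnion fun d hd d' hd' hne =>
      (hdisj d hd d' hd' hne).mono (filter_subset _ _) (filter_subset _ _)]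
  simp only [card_filter_cellsOf_row, sum_add_distrib, ← mul_sum, ← card_filter, verticalsAt,
    horizontalsAt]

theorem even_card_verticalsAt (D : DTab)
    (hdisj : ∀ d ∈ D.doms, ∀ d' ∈ D.doms, d ≠ d' → Disjoint (cellsOf d) (cellsOf d'))
    (hrow : ∀ r, Even #{c ∈ D.cells | c.1 = r}) (r : ℕ) : Even #(D.verticalsAt r) := by
  induction r with
  | zero =>
    have h0 := hrow 0
    rw [card_filter_cells_row D hdisj, filter_false_of_mem (by simp), card_empty] at h0
    simpa [Nat.even_add, parity_simps] using h0
  | succ r ih =>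
    have hr := hrow (r + 1)
    have hshift : {d ∈ D.doms | d.2.1 = true ∧ d.1.1 + 1 = r + 1} = D.verticalsAt r := by
      simp only [verticalsAt, Nat.add_right_cancel_iff]
    rw [card_filter_cells_row D hdisj, hshift] at hr
    simpa [Nat.even_add, ih, parity_simps] using hr

theorem even_Vcount_of_even_card_verticalsAt (D : DTab) (h : ∀ r, Even #(D.verticalsAt r)) :
    Even D.Vcount := by
  rw [Vcount, card_eq_sum_card_image (·.1.1)]
  refine Finset.even_sum _ fun r _ => ?_
  rw [filter_filter]
  exact h r

end DTab

/-- If every row of the partition `λ` has even length (e.g. `λ = κ^□`), then in any domino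
tableau `D` of shape `λ`, the number of vertical dominoes occupying rows `r` and `r+1` is even
for every `r`; consequently `V(D)` is even, so `spin(D) = V(D)/2` is an integer. -/
theorem vertical_dominoes_even (n : ℕ) (lam : Nat.Partition n)
    (heven : ∀ i : ℕ, Even ((partsList lam).getD i 0))
    (D : DTab) (hD : D.IsTableau (diagram lam)) :
    (∀ r : ℕ, Even ((D.doms.filter (fun d => d.2.1 = true ∧ d.1.1 = r)).card)) ∧
    Even D.Vcount ∧ 2 * D.spin = D.Vcount := by
  obtain ⟨-, hdisj, hcells, -, -⟩ := hD
  have hrow : ∀ r, Even #{c ∈ D.cells | c.1 = r} := fun r => by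
    rw [hcells, card_filter_diagram_row]
    exact heven r
  have hvert := D.even_card_verticalsAt hdisj hrow
  have hV := D.even_Vcount_of_even_card_verticalsAt hvert
  exact ⟨hvert, hV, Nat.two_mul_div_two_of_even hV⟩
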